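/- Let Ω ⊂ ℝ^d be a bounded open set, S := ℝ^d∖Ω, and h > 0. Then for all measurable u, v: Ω → [0,1] (extended by 0 to ℝ^d), |E_h(u) − E_h(v)| ≤ (4 C̃ / √h) ‖u − v‖_{L¹(Ω)}. In particular, for each fixed h > 0 the functional E_h is continuous on {u: Ω → [0,1] measurable} with respect to the strong L¹(Ω) topology. -/

import Mathlib

open MeasureTheory Filter

/-- The rescaled kernel `K_h(x) = h^{-d/2} K(x/√h)`. -/
noncomputable def scaledKernel {d : ℕ} (K : EuclideanSpace ℝ (Fin d) → ℝ) (h : ℝ)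
    (x : EuclideanSpace ℝ (Fin d)) : ℝ :=
  h ^ (-(d : ℝ) / 2) * K ((Real.sqrt h)⁻¹ • x)

/-- Convolution over `ℝ^d`: `(f * g)(x) = ∫ f(x-y) g(y) dy`. -/
noncomputable def convK {d : ℕ} (f g : EuclideanSpace ℝ (Fin d) → ℝ)
    (x : EuclideanSpace ℝ (Fin d)) : ℝ :=
  ∫ y, f (x - y) * g y

/-- The approximate thresholding energy
`E_h(u) = (1/√h) ∫_Ω [ γ̃PV u K_h*(1_Ω - u) + γ̃SP u K_h*1_S + γ̃SV (1_Ω - u) K_h*1_S ] dx`,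
where `S = ℝ^d ∖ Ω = Ωᶜ`. -/
noncomputable def threshEnergy {d : ℕ} (Ω : Set (EuclideanSpace ℝ (Fin d)))
    (γPV γSP γSV K : EuclideanSpace ℝ (Fin d) → ℝ) (h : ℝ)
    (u : EuclideanSpace ℝ (Fin d) → ℝ) : ℝ :=
  (Real.sqrt h)⁻¹ * ∫ x in Ω,
    (γPV x * (u x * convK (scaledKernel K h) (fun y => Set.indicator Ω 1 y - u y) x)
      + γSP x * (u x * convK (scaledKernel K h) (Set.indicator Ωᶜ 1) x)
      + γSV x * ((Set.indicator Ω 1 x - u x) * convK (scaledKernel K h) (Set.indicator Ωᶜ 1) x))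

/-!
Write `A_w := K_h * (1_Ω - w)` and `B := K_h * 1_S`. Since `K_h ≥ 0` has unit mass, every
convolution of a function with values in `[-1, 1]` again has values in `[-1, 1]`, so the
integrands of `E_h(u)` and `E_h(v)` differ pointwise by at most
`C̃ (3 |u - v| + |A_u - A_v|) ≤ C̃ (3 |u - v| + K_h * |u - v|)`.
Integrating over `Ω`, Fubini gives `∫_Ω K_h * |u - v| ≤ ∫ |u - v| = ‖u - v‖_{L¹(Ω)}`.
-/

section ScaledKernel

variable {d : ℕ} {K : EuclideanSpace ℝ (Fin d) → ℝ} {h : ℝ}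

theorem scaledKernel_nonneg (hK : ∀ x, 0 ≤ K x) (hh : 0 ≤ h) (x : EuclideanSpace ℝ (Fin d)) :
    0 ≤ scaledKernel K h x :=
  mul_nonneg (Real.rpow_nonneg hh _) (hK _)

theorem Measurable.scaledKernel (hK : Measurable K) (h : ℝ) : Measurable (scaledKernel K h) :=
  (hK.comp (measurable_const_smul _)).const_mul _

theorem MeasureTheory.Integrable.scaledKernel (hK : Integrable K) (hh : 0 < h) :
    Integrable (scaledKernel K h) :=
  ((integrable_comp_smul_iff volume K (inv_ne_zero (Real.sqrt_pos.2 hh).ne')).2 hK).const_mul _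

theorem integral_scaledKernel (hh : 0 < h) : ∫ x, scaledKernel K h x = ∫ x, K x := by
  have hsqrt_pow : Real.sqrt h ^ d = h ^ ((d : ℝ) / 2) := by
    rw [← Real.rpow_natCast, Real.sqrt_eq_rpow, ← Real.rpow_mul hh.le]
    ring_nf
  simp only [scaledKernel]
  rw [integral_const_mul, Measure.integral_comp_inv_smul_of_nonneg volume K (Real.sqrt_nonneg h),
    finrank_euclideanSpace_fin, smul_eq_mul, hsqrt_pow, ← mul_assoc, ← Real.rpow_add hh,
    neg_div, neg_add_cancel, Real.rpow_zero, one_mul]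

end ScaledKernel

section Convolution

variable {d : ℕ} {k : EuclideanSpace ℝ (Fin d) → ℝ}

theorem convK_eq_convolution (k f : EuclideanSpace ℝ (Fin d) → ℝ) :
    convK k f = convolution f k (ContinuousLinearMap.mul ℝ ℝ) := by
  ext x
  simp [convK, convolution_def, mul_comm]

theorem stronglyMeasurable_convK (hk : Measurable k) {w : EuclideanSpace ℝ (Fin d) → ℝ}
    (hw : Measurable w) : StronglyMeasurable (convK k w) :=
  ((hk.comp (measurable_fst.sub measurable_snd)).mul
    (hw.comp measurable_snd)).stronglyMeasurable.integral_prod_right'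

theorem integrable_kernel_mul (hk : Integrable k) {w : EuclideanSpace ℝ (Fin d) → ℝ}
    (hw : Measurable w) (hw1 : ∀ y, |w y| ≤ 1) (x : EuclideanSpace ℝ (Fin d)) :
    Integrable (fun y => k (x - y) * w y) :=
  (hk.comp_sub_left x).mul_bdd hw.aestronglyMeasurable (Eventually.of_forall hw1)

theorem convK_sub (hk : Integrable k) {w₁ w₂ : EuclideanSpace ℝ (Fin d) → ℝ}
    (hw₁ : Measurable w₁) (hw₁1 : ∀ y, |w₁ y| ≤ 1)
    (hw₂ : Measurable w₂) (hw₂1 : ∀ y, |w₂ y| ≤ 1) (x : EuclideanSpace ℝ (Fin d)) :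
    convK k w₁ x - convK k w₂ x = convK k (fun y => w₁ y - w₂ y) x := by
  simp only [convK, mul_sub]
  exact (integral_sub (integrable_kernel_mul hk hw₁ hw₁1 x)
    (integrable_kernel_mul hk hw₂ hw₂1 x)).symm

theorem abs_convK_le (hk0 : ∀ x, 0 ≤ k x) (w : EuclideanSpace ℝ (Fin d) → ℝ)
    (x : EuclideanSpace ℝ (Fin d)) : |convK k w x| ≤ convK k (fun y => |w y|) x := by
  refine (abs_integral_le_integral_abs).trans_eq ?_
  simp only [abs_mul, abs_of_nonneg (hk0 _)]
  rfl

theorem abs_convK_le_one (hk0 : ∀ x, 0 ≤ k x) (hk : Integrable k) (hk1 : ∫ x, k x = 1)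
    {w : EuclideanSpace ℝ (Fin d) → ℝ} (hw : Measurable w) (hw1 : ∀ y, |w y| ≤ 1)
    (x : EuclideanSpace ℝ (Fin d)) : |convK k w x| ≤ 1 := by
  refine (abs_convK_le hk0 w x).trans ?_
  calc convK k (fun y => |w y|) x ≤ ∫ y, k (x - y) :=
        integral_mono (integrable_kernel_mul hk hw.abs (by simpa using hw1) x)
          (hk.comp_sub_left x) fun y => mul_le_of_le_one_right (hk0 _) (hw1 y)
    _ = 1 := by rw [integral_sub_left_eq_self, hk1]

theorem setIntegral_convK_le (hk0 : ∀ x, 0 ≤ k x) (hk : Integrable k) (hk1 : ∫ x, k x = 1)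
    {f : EuclideanSpace ℝ (Fin d) → ℝ} (hf : Integrable f) (hf0 : ∀ y, 0 ≤ f y)
    (s : Set (EuclideanSpace ℝ (Fin d))) : ∫ x in s, convK k f x ≤ ∫ y, f y := by
  have hconv_int : Integrable (convK k f) := by
    rw [convK_eq_convolution]; exact hf.integrable_convolution _ hk
  have hconv_nonneg : ∀ x, 0 ≤ convK k f x := fun x =>
    integral_nonneg fun y => mul_nonneg (hk0 _) (hf0 y)
  calc ∫ x in s, convK k f x ≤ ∫ x, convK k f x :=
        setIntegral_le_integral hconv_int (Eventually.of_forall hconv_nonneg)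
    _ = ∫ y, f y := by
        rw [convK_eq_convolution, integral_convolution _ hf hk, hk1]; simp

end Convolution

theorem abs_mul_mul_le_of_abs_le_one {a C x y : ℝ} (ha : 0 ≤ a ∧ a ≤ C) (hy : |y| ≤ 1) :
    |a * (x * y)| ≤ C * |x| := by
  rw [abs_mul, abs_mul, abs_of_nonneg ha.1]
  calc a * (|x| * |y|) ≤ C * (|x| * 1) :=
        mul_le_mul ha.2 (mul_le_mul_of_nonneg_left hy (abs_nonneg x)) (by positivity)
          (ha.1.trans ha.2)
    _ = C * |x| := by rw [mul_one]

theorem abs_indicator_one_sub_le_one {α : Type*} (s : Set α) {u : α → ℝ}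
    (hu : ∀ x, u x ∈ Set.Icc (0 : ℝ) 1) (x : α) : |s.indicator 1 x - u x| ≤ 1 := by
  obtain ⟨hu0, hu1⟩ := hu x
  by_cases hx : x ∈ s
  · rw [Set.indicator_of_mem hx, Pi.one_apply, abs_le]; constructor <;> linarith
  · rw [Set.indicator_of_notMem hx, abs_le]; constructor <;> linarith

theorem abs_indicator_one_le_one {α : Type*} (s : Set α) (x : α) :
    |s.indicator (1 : α → ℝ) x| ≤ 1 := by
  by_cases hx : x ∈ s <;> simp [hx]

theorem abs_energyIntegrand_sub_le {a b c C u v A A' B i : ℝ} (ha : 0 ≤ a ∧ a ≤ C)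
    (hb : 0 ≤ b ∧ b ≤ C) (hc : 0 ≤ c ∧ c ≤ C) (hv : |v| ≤ 1) (hA : |A| ≤ 1) (hB : |B| ≤ 1) :
    |(a * (u * A) + b * (u * B) + c * ((i - u) * B))
        - (a * (v * A') + b * (v * B) + c * ((i - v) * B))|
      ≤ C * (3 * |u - v| + |A - A'|) := by
  have hsplit : (a * (u * A) + b * (u * B) + c * ((i - u) * B))
        - (a * (v * A') + b * (v * B) + c * ((i - v) * B))
      = a * ((u - v) * A) + a * ((A - A') * v) + b * ((u - v) * B) + c * ((v - u) * B) := by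
    ring
  have h₁ := abs_mul_mul_le_of_abs_le_one (x := u - v) ha hA
  have h₂ := abs_mul_mul_le_of_abs_le_one (x := A - A') ha hv
  have h₃ := abs_mul_mul_le_of_abs_le_one (x := u - v) hb hB
  have h₄ := abs_mul_mul_le_of_abs_le_one (x := v - u) hc hB
  rw [abs_sub_comm v u] at h₄
  rw [hsplit]
  linarith [abs_add_le (a * ((u - v) * A) + a * ((A - A') * v) + b * ((u - v) * B))
    (c * ((v - u) * B)), abs_add_le (a * ((u - v) * A) + a * ((A - A') * v)) (b * ((u - v) * B)),
    abs_add_le (a * ((u - v) * A)) (a * ((A - A') * v))]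

section Density

variable {d : ℕ} (Ω : Set (EuclideanSpace ℝ (Fin d)))
  (γPV γSP γSV k : EuclideanSpace ℝ (Fin d) → ℝ)

noncomputable def threshDensity (u : EuclideanSpace ℝ (Fin d) → ℝ)
    (x : EuclideanSpace ℝ (Fin d)) : ℝ :=
  γPV x * (u x * convK k (fun y => Set.indicator Ω 1 y - u y) x)
    + γSP x * (u x * convK k (Set.indicator Ωᶜ 1) x)
    + γSV x * ((Set.indicator Ω 1 x - u x) * convK k (Set.indicator Ωᶜ 1) x)

theorem threshEnergy_eq (K : EuclideanSpace ℝ (Fin d) → ℝ) (h : ℝ)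
    (u : EuclideanSpace ℝ (Fin d) → ℝ) :
    threshEnergy Ω γPV γSP γSV K h u
      = (Real.sqrt h)⁻¹ * ∫ x in Ω, threshDensity Ω γPV γSP γSV (scaledKernel K h) u x :=
  rfl

variable {Ω γPV γSP γSV k} {C : ℝ}

theorem measurable_threshDensity (hΩ : MeasurableSet Ω) (hPV : Measurable γPV)
    (hSP : Measurable γSP) (hSV : Measurable γSV) (hk : Measurable k)
    {u : EuclideanSpace ℝ (Fin d) → ℝ} (hu : Measurable u) :
    Measurable (threshDensity Ω γPV γSP γSV k u) := by
  have hχ : Measurable (Ω.indicator (1 : EuclideanSpace ℝ (Fin d) → ℝ)) :=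
    measurable_one.indicator hΩ
  have hA := (stronglyMeasurable_convK hk (hχ.sub hu)).measurable
  have hB := (stronglyMeasurable_convK hk (measurable_one.indicator hΩ.compl)).measurable
  exact ((hPV.mul (hu.mul hA)).add (hSP.mul (hu.mul hB))).add (hSV.mul ((hχ.sub hu).mul hB))

theorem abs_threshDensity_le (hPV : ∀ x, 0 ≤ γPV x ∧ γPV x ≤ C)
    (hSP : ∀ x, 0 ≤ γSP x ∧ γSP x ≤ C) (hSV : ∀ x, 0 ≤ γSV x ∧ γSV x ≤ C)
    (hk0 : ∀ x, 0 ≤ k x) (hk : Integrable k) (hk1 : ∫ x, k x = 1) (hΩ : MeasurableSet Ω)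
    {u : EuclideanSpace ℝ (Fin d) → ℝ} (hu : Measurable u)
    (hu01 : ∀ x, u x ∈ Set.Icc (0 : ℝ) 1) (x : EuclideanSpace ℝ (Fin d)) :
    |threshDensity Ω γPV γSP γSV k u x| ≤ 3 * C := by
  have hχ : Measurable (Ω.indicator (1 : EuclideanSpace ℝ (Fin d) → ℝ)) :=
    measurable_one.indicator hΩ
  have hA : |convK k (fun y => Ω.indicator 1 y - u y) x| ≤ 1 :=
    abs_convK_le_one hk0 hk hk1 (hχ.sub hu) (abs_indicator_one_sub_le_one Ω hu01) x
  have hB := abs_convK_le_one hk0 hk hk1 (measurable_one.indicator hΩ.compl)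
    (abs_indicator_one_le_one Ωᶜ) x
  have hu1 : |u x| ≤ 1 := abs_le.2 ⟨by linarith [(hu01 x).1], (hu01 x).2⟩
  have hC : 0 ≤ C := (hPV x).1.trans (hPV x).2
  have h₁ := abs_mul_mul_le_of_abs_le_one (x := u x) (hPV x) hA
  have h₂ := abs_mul_mul_le_of_abs_le_one (x := u x) (hSP x) hB
  have h₃ := abs_mul_mul_le_of_abs_le_one (x := Ω.indicator 1 x - u x) (hSV x) hB
  have h₄ := mul_le_mul_of_nonneg_left hu1 hC
  have h₅ := mul_le_mul_of_nonneg_left (abs_indicator_one_sub_le_one Ω hu01 x) hC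
  unfold threshDensity
  linarith [abs_add_three (γPV x * (u x * convK k (fun y => Ω.indicator 1 y - u y) x))
    (γSP x * (u x * convK k (Ωᶜ.indicator 1) x))
    (γSV x * ((Ω.indicator 1 x - u x) * convK k (Ωᶜ.indicator 1) x))]

theorem abs_threshDensity_sub_le (hPV : ∀ x, 0 ≤ γPV x ∧ γPV x ≤ C)
    (hSP : ∀ x, 0 ≤ γSP x ∧ γSP x ≤ C) (hSV : ∀ x, 0 ≤ γSV x ∧ γSV x ≤ C)
    (hk0 : ∀ x, 0 ≤ k x) (hk : Integrable k) (hk1 : ∫ x, k x = 1) (hΩ : MeasurableSet Ω)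
    {u v : EuclideanSpace ℝ (Fin d) → ℝ} (hu : Measurable u) (hv : Measurable v)
    (hu01 : ∀ x, u x ∈ Set.Icc (0 : ℝ) 1) (hv01 : ∀ x, v x ∈ Set.Icc (0 : ℝ) 1)
    (x : EuclideanSpace ℝ (Fin d)) :
    |threshDensity Ω γPV γSP γSV k u x - threshDensity Ω γPV γSP γSV k v x|
      ≤ C * (3 * |u x - v x| + convK k (fun y => |u y - v y|) x) := by
  have hχ : Measurable (Ω.indicator (1 : EuclideanSpace ℝ (Fin d) → ℝ)) :=
    measurable_one.indicator hΩ
  have hAu : |convK k (fun y => Ω.indicator 1 y - u y) x| ≤ 1 :=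
    abs_convK_le_one hk0 hk hk1 (hχ.sub hu) (abs_indicator_one_sub_le_one Ω hu01) x
  have hB := abs_convK_le_one hk0 hk hk1 (measurable_one.indicator hΩ.compl)
    (abs_indicator_one_le_one Ωᶜ) x
  have hv1 : |v x| ≤ 1 := abs_le.2 ⟨by linarith [(hv01 x).1], (hv01 x).2⟩
  have hAuv : |convK k (fun y => Ω.indicator 1 y - u y) x
      - convK k (fun y => Ω.indicator 1 y - v y) x| ≤ convK k (fun y => |u y - v y|) x := by
    rw [convK_sub (w₁ := fun y => Ω.indicator 1 y - u y) (w₂ := fun y => Ω.indicator 1 y - v y)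
      hk (hχ.sub hu) (abs_indicator_one_sub_le_one Ω hu01) (hχ.sub hv)
      (abs_indicator_one_sub_le_one Ω hv01)]
    refine (abs_convK_le hk0 _ x).trans_eq ?_
    simp only [sub_sub_sub_cancel_left, abs_sub_comm]
  calc _ ≤ C * (3 * |u x - v x| + |convK k (fun y => Ω.indicator 1 y - u y) x
        - convK k (fun y => Ω.indicator 1 y - v y) x|) :=
        abs_energyIntegrand_sub_le (hPV x) (hSP x) (hSV x) hv1 hAu hB
    _ ≤ _ := by gcongr; exact (hPV x).1.trans (hPV x).2

theorem integrableOn_threshDensity (hΩ : MeasurableSet Ω) (hΩfin : volume Ω ≠ ⊤)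
    (hPVm : Measurable γPV) (hSPm : Measurable γSP) (hSVm : Measurable γSV)
    (hPV : ∀ x, 0 ≤ γPV x ∧ γPV x ≤ C)
    (hSP : ∀ x, 0 ≤ γSP x ∧ γSP x ≤ C) (hSV : ∀ x, 0 ≤ γSV x ∧ γSV x ≤ C)
    (hkm : Measurable k) (hk0 : ∀ x, 0 ≤ k x) (hk : Integrable k) (hk1 : ∫ x, k x = 1)
    {u : EuclideanSpace ℝ (Fin d) → ℝ} (hu : Measurable u)
    (hu01 : ∀ x, u x ∈ Set.Icc (0 : ℝ) 1) :
    IntegrableOn (threshDensity Ω γPV γSP γSV k u) Ω :=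
  Measure.integrableOn_of_bounded hΩfin
    (measurable_threshDensity hΩ hPVm hSPm hSVm hkm hu).aestronglyMeasurable
    (ae_of_all _ (abs_threshDensity_le hPV hSP hSV hk0 hk hk1 hΩ hu hu01))

theorem abs_setIntegral_threshDensity_sub_le (hΩ : MeasurableSet Ω) (hΩfin : volume Ω ≠ ⊤)
    (hPVm : Measurable γPV) (hSPm : Measurable γSP) (hSVm : Measurable γSV)
    (hPV : ∀ x, 0 ≤ γPV x ∧ γPV x ≤ C)
    (hSP : ∀ x, 0 ≤ γSP x ∧ γSP x ≤ C) (hSV : ∀ x, 0 ≤ γSV x ∧ γSV x ≤ C)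
    (hkm : Measurable k) (hk0 : ∀ x, 0 ≤ k x) (hk : Integrable k) (hk1 : ∫ x, k x = 1)
    {u v : EuclideanSpace ℝ (Fin d) → ℝ} (hu : Measurable u) (hv : Measurable v)
    (hu01 : ∀ x, u x ∈ Set.Icc (0 : ℝ) 1) (hv01 : ∀ x, v x ∈ Set.Icc (0 : ℝ) 1)
    (hu0 : ∀ x ∉ Ω, u x = 0) (hv0 : ∀ x ∉ Ω, v x = 0) :
    |(∫ x in Ω, threshDensity Ω γPV γSP γSV k u x) - ∫ x in Ω, threshDensity Ω γPV γSP γSV k v x|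
      ≤ 4 * C * ∫ x in Ω, |u x - v x| := by
  have hC : 0 ≤ C := (hPV 0).1.trans (hPV 0).2
  have hFu := integrableOn_threshDensity hΩ hΩfin hPVm hSPm hSVm hPV hSP hSV hkm hk0 hk hk1 hu hu01
  have hFv := integrableOn_threshDensity hΩ hΩfin hPVm hSPm hSVm hPV hSP hSV hkm hk0 hk hk1 hv hv01
  have hdiff_m : Measurable fun y => |u y - v y| := (hu.sub hv).abs
  have hdiff_le : ∀ y, |u y - v y| ≤ 1 := fun y => abs_sub_le_of_nonneg_of_le
    (hu01 y).1 (hu01 y).2 (hv01 y).1 (hv01 y).2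
  have hdiff_int : IntegrableOn (fun y => |u y - v y|) Ω :=
    Measure.integrableOn_of_bounded hΩfin hdiff_m.aestronglyMeasurable
      (ae_of_all _ fun y => by simpa using hdiff_le y)
  have hconv_int : IntegrableOn (convK k fun y => |u y - v y|) Ω :=
    Measure.integrableOn_of_bounded hΩfin
      (stronglyMeasurable_convK hkm hdiff_m).aestronglyMeasurable
      (ae_of_all _ (abs_convK_le_one hk0 hk hk1 hdiff_m (by simpa using hdiff_le)))
  have hconv_le : ∫ x in Ω, convK k (fun y => |u y - v y|) x ≤ ∫ x in Ω, |u x - v x| := by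
    have hdiff_out : ∀ x ∉ Ω, |u x - v x| = 0 := fun x hx => by simp [hu0 x hx, hv0 x hx]
    exact (setIntegral_convK_le hk0 hk hk1
      (hdiff_int.integrable_of_forall_notMem_eq_zero hdiff_out) (fun y => abs_nonneg _) Ω).trans_eq
      (setIntegral_eq_integral_of_forall_compl_eq_zero hdiff_out).symm
  calc _ = |∫ x in Ω, (threshDensity Ω γPV γSP γSV k u x - threshDensity Ω γPV γSP γSV k v x)| := by
        rw [integral_sub hFu hFv]
    _ ≤ ∫ x in Ω, C * (3 * |u x - v x| + convK k (fun y => |u y - v y|) x) :=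
        abs_integral_le_integral_abs.trans <| integral_mono
          (hFu.sub hFv).abs
          (((hdiff_int.const_mul 3).add hconv_int).const_mul C)
          (abs_threshDensity_sub_le hPV hSP hSV hk0 hk hk1 hΩ hu hv hu01 hv01)
    _ = C * (3 * (∫ x in Ω, |u x - v x|) + ∫ x in Ω, convK k (fun y => |u y - v y|) x) := by
        rw [integral_const_mul, integral_add (hdiff_int.const_mul 3) hconv_int,
          integral_const_mul]
    _ ≤ C * (3 * (∫ x in Ω, |u x - v x|) + ∫ x in Ω, |u x - v x|) := by gcongr
    _ = 4 * C * ∫ x in Ω, |u x - v x| := by ring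

end Density

theorem energy_L1_continuity_general {d : ℕ}
    (Ω : Set (EuclideanSpace ℝ (Fin d)))
    (hΩb : Bornology.IsBounded Ω) (hΩm : MeasurableSet Ω)
    (K : EuclideanSpace ℝ (Fin d) → ℝ) (hKmeas : Measurable K)
    (hKnonneg : ∀ x, 0 ≤ K x)
    (hKint : Integrable K) (hKone : (∫ x, K x) = 1)
    (γPV γSP γSV : EuclideanSpace ℝ (Fin d) → ℝ)
    (hPVmeas : Measurable γPV) (hSPmeas : Measurable γSP) (hSVmeas : Measurable γSV)
    (Ctil : ℝ)
    (hPVb : ∀ x, 0 ≤ γPV x ∧ γPV x ≤ Ctil)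
    (hSPb : ∀ x, 0 ≤ γSP x ∧ γSP x ≤ Ctil)
    (hSVb : ∀ x, 0 ≤ γSV x ∧ γSV x ≤ Ctil)
    (u v : EuclideanSpace ℝ (Fin d) → ℝ)
    (humeas : Measurable u) (hvmeas : Measurable v)
    (hu01 : ∀ x, u x ∈ Set.Icc (0:ℝ) 1) (hv01 : ∀ x, v x ∈ Set.Icc (0:ℝ) 1)
    (husupp : ∀ x ∉ Ω, u x = 0) (hvsupp : ∀ x ∉ Ω, v x = 0)
    (h : ℝ) (hh : 0 < h) :
    |threshEnergy Ω γPV γSP γSV K h u - threshEnergy Ω γPV γSP γSV K h v|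
      ≤ (4 * Ctil / Real.sqrt h) * ∫ x in Ω, |u x - v x| := by
  have hdens := abs_setIntegral_threshDensity_sub_le hΩm hΩb.measure_lt_top.ne
    hPVmeas hSPmeas hSVmeas hPVb hSPb hSVb (hKmeas.scaledKernel h)
    (scaledKernel_nonneg hKnonneg hh.le) (hKint.scaledKernel hh)
    ((integral_scaledKernel hh).trans hKone) humeas hvmeas hu01 hv01 husupp hvsupp
  rw [threshEnergy_eq, threshEnergy_eq, ← mul_sub, abs_mul,
    abs_of_nonneg (inv_nonneg.2 (Real.sqrt_nonneg h)), div_eq_mul_inv, mul_comm _ (Real.sqrt h)⁻¹,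
    mul_assoc]
  gcongr

/-- `L¹`-Lipschitz continuity of the approximate energy at fixed `h`:
`|E_h(u) - E_h(v)| ≤ (4 C̃ / √h) ‖u - v‖_{L¹(Ω)}`. -/
theorem energy_L1_continuity {d : ℕ}
    (Ω : Set (EuclideanSpace ℝ (Fin d))) (hΩo : IsOpen Ω)
    (hΩb : Bornology.IsBounded Ω) (hΩm : MeasurableSet Ω)
    (K : EuclideanSpace ℝ (Fin d) → ℝ) (hKmeas : Measurable K)
    (hKnonneg : ∀ x, 0 ≤ K x) (hKsymm : ∀ x, K (-x) = K x)
    (hKint : Integrable K) (hKone : (∫ x, K x) = 1)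
    (γPV γSP γSV : EuclideanSpace ℝ (Fin d) → ℝ)
    (hPVmeas : Measurable γPV) (hSPmeas : Measurable γSP) (hSVmeas : Measurable γSV)
    (Ctil : ℝ)
    (hPVb : ∀ x, 0 ≤ γPV x ∧ γPV x ≤ Ctil)
    (hSPb : ∀ x, 0 ≤ γSP x ∧ γSP x ≤ Ctil)
    (hSVb : ∀ x, 0 ≤ γSV x ∧ γSV x ≤ Ctil)
    (u v : EuclideanSpace ℝ (Fin d) → ℝ)
    (humeas : Measurable u) (hvmeas : Measurable v)
    (hu01 : ∀ x, u x ∈ Set.Icc (0:ℝ) 1) (hv01 : ∀ x, v x ∈ Set.Icc (0:ℝ) 1)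
    (husupp : ∀ x ∉ Ω, u x = 0) (hvsupp : ∀ x ∉ Ω, v x = 0)
    (h : ℝ) (hh : 0 < h) :
    |threshEnergy Ω γPV γSP γSV K h u - threshEnergy Ω γPV γSP γSV K h v|
      ≤ (4 * Ctil / Real.sqrt h) * ∫ x in Ω, |u x - v x| :=
  energy_L1_continuity_general Ω hΩb hΩm K hKmeas hKnonneg hKint hKone γPV γSP γSV hPVmeas hSPmeas
    hSVmeas Ctil hPVb hSPb hSVb u v humeas hvmeas hu01 hv01 husupp hvsupp h hh
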